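/- arXiv:1703.00616 — 4 statements merged into one kernel-verified Lean document; each statement's English description precedes it below -/
import Mathlib

section
/- Let (x_i, y_i) and (x_i', y_i') be two sequences in X̂ × Y. If d_Y(y_i, y_i') → ∞ as i → ∞, then d_Γ((x_i, y_i), (x_i', y_i')) → ∞ as i → ∞. -/
/-!
Fix a compact set `K` whose translates cover `X̂ × Y`. Since `dΓ` is proper and continuous,
the pairs `(k, q)` with `k ∈ K` and `dΓ k q ≤ R` lie in a compact set, on which the continuous
function `dist k.2 q.2` is bounded. Translating any pair `(p, q)` with `dΓ p q ≤ R` so that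
`p` lands in `K` changes neither `dΓ p q` nor `dist p.2 q.2`, so `dΓ`-bounded pairs have
bounded `Y`-distance, which is the contrapositive of the claim.
-/

open Filter Topology

section DistanceFunction

variable {α : Type*} [TopologicalSpace α] (d : α → α → ℝ)

theorem continuous_of_ball_mem_nhds (hsymm : ∀ p q, d p q = d q p)
    (htri : ∀ p q r, d p r ≤ d p q + d q r) (hball : ∀ p, ∀ ε > 0, {q | d p q < ε} ∈ 𝓝 p)
    (p₀ : α) : Continuous (d p₀) := by
  refine continuous_iff_continuousAt.2 fun q => Metric.tendsto_nhds.2 fun ε hε => ?_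
  filter_upwards [hball q ε hε] with q' hq'
  rw [Real.dist_eq, abs_lt]
  constructor <;> linarith [htri p₀ q q', htri p₀ q' q, hsymm q q']

theorem IsCompact.exists_isCompact_forall_le_mem {K : Set α} (hK : IsCompact K)
    (htri : ∀ p q r, d p r ≤ d p q + d q r) (hcont : ∀ p, Continuous (d p))
    (hproper : ∀ p r, IsCompact {q | d p q ≤ r}) (R : ℝ) :
    ∃ L : Set α, IsCompact L ∧ ∀ k ∈ K, ∀ q, d k q ≤ R → q ∈ L := by
  rcases K.eq_empty_or_nonempty with rfl | ⟨p₀, hp₀⟩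
  · exact ⟨∅, isCompact_empty, by simp⟩
  obtain ⟨D, hD⟩ := hK.exists_bound_of_continuousOn (hcont p₀).continuousOn
  refine ⟨{q | d p₀ q ≤ D + R}, hproper p₀ _, fun k hk q hq => ?_⟩
  show d p₀ q ≤ D + R
  linarith [htri p₀ k q, (le_abs_self _).trans (hD k hk)]

theorem exists_forall_le_of_cocompact {Γ : Type*} [Group Γ] [MulAction Γ α]
    {K : Set α} (hK : IsCompact K) (hcov : ∀ p, ∃ γ : Γ, γ • p ∈ K)
    (htri : ∀ p q r, d p r ≤ d p q + d q r) (hcont : ∀ p, Continuous (d p))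
    (hproper : ∀ p r, IsCompact {q | d p q ≤ r})
    (hinv : ∀ (γ : Γ) p q, d (γ • p) (γ • q) = d p q)
    {φ : α → α → ℝ} (hφ : Continuous (Function.uncurry φ))
    (hφinv : ∀ (γ : Γ) p q, φ (γ • p) (γ • q) = φ p q) (R : ℝ) :
    ∃ C, ∀ p q, d p q ≤ R → φ p q ≤ C := by
  obtain ⟨L, hL, hKL⟩ := hK.exists_isCompact_forall_le_mem d htri hcont hproper R
  obtain ⟨C, hC⟩ := (hK.prod hL).exists_bound_of_continuousOn hφ.continuousOn
  refine ⟨C, fun p q hpq => ?_⟩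
  obtain ⟨γ, hγ⟩ := hcov p
  have hγq : γ • q ∈ L := hKL _ hγ _ (by rwa [hinv])
  rw [← hφinv γ]
  exact (le_abs_self _).trans (hC (γ • p, γ • q) ⟨hγ, hγq⟩)

end DistanceFunction

theorem stmt0_general
    {Γ : Type*} [Group Γ]
    {Xh : Type*} [TopologicalSpace Xh] [MulAction Γ Xh]
    {Y : Type*} [MetricSpace Y] [MulAction Γ Y]
    (hisomY : ∀ (γ : Γ) (y y' : Y), dist (γ • y) (γ • y') = dist y y')
    -- the diagonal action of `Γ` on `X̂ × Y` is cocompact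
    (hcocompact : ∃ K : Set (Xh × Y), IsCompact K ∧ ∀ p : Xh × Y, ∃ γ : Γ, γ • p ∈ K)
    -- `dΓ` is a metric on `X̂ × Y` …
    (dΓ : (Xh × Y) → (Xh × Y) → ℝ)
    (hsymm : ∀ p q, dΓ p q = dΓ q p)
    (htri : ∀ p q r, dΓ p r ≤ dΓ p q + dΓ q r)
    -- … which is `Γ`-invariant …
    (hinv : ∀ (γ : Γ) (p q : Xh × Y), dΓ (γ • p) (γ • q) = dΓ p q)
    -- … proper (closed balls are compact) …
    (hproper : ∀ (p : Xh × Y) (r : ℝ), IsCompact {q | dΓ p q ≤ r})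
    -- … and induces the product topology on `X̂ × Y`
    (htopo : ∀ (p : Xh × Y) (s : Set (Xh × Y)),
      s ∈ 𝓝 p ↔ ∃ ε > 0, {q | dΓ p q < ε} ⊆ s)
    (x x' : ℕ → Xh) (y y' : ℕ → Y)
    (hY : Tendsto (fun i => dist (y i) (y' i)) atTop atTop) :
    Tendsto (fun i => dΓ (x i, y i) (x' i, y' i)) atTop atTop := by
  obtain ⟨K, hK, hKcov⟩ := hcocompact
  have hcont : ∀ p, Continuous (dΓ p) := continuous_of_ball_mem_nhds dΓ hsymm htri
    fun p ε hε => (htopo p _).2 ⟨ε, hε, subset_rfl⟩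
  have hdistY : Continuous (Function.uncurry fun p q : Xh × Y => dist p.2 q.2) := by
    simp only [Function.uncurry_def]; fun_prop
  refine tendsto_atTop.2 fun R => ?_
  obtain ⟨C, hC⟩ := exists_forall_le_of_cocompact dΓ hK hKcov htri hcont hproper hinv hdistY
    (fun γ p q => hisomY γ p.2 q.2) R
  filter_upwards [hY.eventually_gt_atTop C] with i hi
  by_contra! h
  exact hi.not_ge (hC _ _ h.le)

/-- Lemma `boundedy` of the paper.
Let `Γ` act by homeomorphisms on a topological space `X̂` and by isometries
on a metric space `Y`.  Assume the diagonal action on `X̂ × Y` is cocompact,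
and let `dΓ` be a `Γ`-invariant proper metric on `X̂ × Y` inducing the product
topology.  If `dist (yᵢ) (yᵢ') → ∞` then `dΓ (xᵢ, yᵢ) (xᵢ', yᵢ') → ∞`. -/
theorem stmt0
    {Γ : Type*} [Group Γ]
    {Xh : Type*} [TopologicalSpace Xh] [MulAction Γ Xh]
    (hcont : ∀ γ : Γ, Continuous (fun x : Xh => γ • x))
    {Y : Type*} [MetricSpace Y] [MulAction Γ Y]
    (hisomY : ∀ (γ : Γ) (y y' : Y), dist (γ • y) (γ • y') = dist y y')
    -- the diagonal action of `Γ` on `X̂ × Y` is cocompact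
    (hcocompact : ∃ K : Set (Xh × Y), IsCompact K ∧ ∀ p : Xh × Y, ∃ γ : Γ, γ • p ∈ K)
    -- `dΓ` is a metric on `X̂ × Y` …
    (dΓ : (Xh × Y) → (Xh × Y) → ℝ)
    (hsymm : ∀ p q, dΓ p q = dΓ q p)
    (htri : ∀ p q r, dΓ p r ≤ dΓ p q + dΓ q r)
    (heq : ∀ p q, dΓ p q = 0 ↔ p = q)
    -- … which is `Γ`-invariant …
    (hinv : ∀ (γ : Γ) (p q : Xh × Y), dΓ (γ • p) (γ • q) = dΓ p q)
    -- … proper (closed balls are compact) …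
    (hproper : ∀ (p : Xh × Y) (r : ℝ), IsCompact {q | dΓ p q ≤ r})
    -- … and induces the product topology on `X̂ × Y`
    (htopo : ∀ (p : Xh × Y) (s : Set (Xh × Y)),
      s ∈ 𝓝 p ↔ ∃ ε > 0, {q | dΓ p q < ε} ⊆ s)
    (x x' : ℕ → Xh) (y y' : ℕ → Y)
    (hY : Tendsto (fun i => dist (y i) (y' i)) atTop atTop) :
    Tendsto (fun i => dΓ (x i, y i) (x' i, y' i)) atTop atTop :=
  stmt0_general hisomY hcocompact dΓ hsymm htri hinv hproper htopo x x' y y' hY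
end

section
/- Fix basepoints x₀ ∈ X and y₀ ∈ Y. Let (x_i, y_i) and (x_i', y_i') be sequences in X × Y such that all y_i and y_i' remain within uniformly bounded d_Y-distance of y₀, and all x_i and x_i' remain within uniformly bounded d_X-distance of the orbit Stab_Γ(y₀)·x₀. If d_X(x_i, x_i') → ∞ as i → ∞, then d_Γ((x_i, y_i), (x_i', y_i')) → ∞ as i → ∞. -/
open Filter Topology

/-!
Translate `(xᵢ, yᵢ)` by `gᵢ⁻¹` and `(xᵢ', yᵢ')` by `gᵢ'⁻¹`, where `gᵢ, gᵢ' ∈ Stab_Γ(y₀)` are the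
orbit elements near `xᵢ, xᵢ'`: both land in the fixed compact set
`K = B̄_X(x₀, D) × B̄_Y(y₀, C)`. If `dΓ((xᵢ, yᵢ), (xᵢ', yᵢ')) ≤ R`, invariance of `dΓ` shows that
`gᵢ⁻¹ gᵢ'` moves a point of `K` to within `dΓ`-distance `R` of `K`; by properness of `dΓ` and
proper discontinuity only finitely many group elements do so. Hence `dX(x₀, gᵢ⁻¹ gᵢ' x₀)` is
bounded, and so is `dX(xᵢ, xᵢ') ≤ 2D + dX(x₀, gᵢ⁻¹ gᵢ' x₀)`.
-/

section DistanceFunction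

variable {P : Type*} [TopologicalSpace P] {d : P → P → ℝ}

theorem upperSemicontinuous_of_ball_mem_nhds (htri : ∀ p q r, d p r ≤ d p q + d q r)
    (hball : ∀ p, ∀ ε > 0, {q | d p q < ε} ∈ 𝓝 p) (p₀ : P) :
    UpperSemicontinuous (d p₀) := by
  intro q c hc
  filter_upwards [hball q (c - d p₀ q) (sub_pos.2 hc)] with r hr
  linarith [htri p₀ q r, show d q r < c - d p₀ q from hr]

theorem finite_setOf_dist_smul_le {Γ : Type*} [SMul Γ P]
    (hpd : ∀ K : Set P, IsCompact K → {γ : Γ | ∃ p ∈ K, γ • p ∈ K}.Finite)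
    (htri : ∀ p q r, d p r ≤ d p q + d q r) (hball : ∀ p, ∀ ε > 0, {q | d p q < ε} ∈ 𝓝 p)
    (hproper : ∀ p r, IsCompact {q | d p q ≤ r}) {K : Set P} (hK : IsCompact K) (R : ℝ) :
    {γ : Γ | ∃ a ∈ K, ∃ b ∈ K, d a (γ • b) ≤ R}.Finite := by
  rcases K.eq_empty_or_nonempty with rfl | ⟨p₀, -⟩
  · simp
  obtain ⟨M, hM⟩ := ((upperSemicontinuous_of_ball_mem_nhds htri hball p₀).upperSemicontinuousOn
    K).bddAbove_of_isCompact hK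
  refine (hpd (K ∪ {q | d p₀ q ≤ M + R}) (hK.union (hproper p₀ _))).subset ?_
  rintro γ ⟨a, ha, b, hb, hab⟩
  have haM : d p₀ a ≤ M := hM ⟨a, ha, rfl⟩
  exact ⟨b, .inl hb, .inr (show d p₀ (γ • b) ≤ M + R by linarith [htri p₀ a (γ • b)])⟩

end DistanceFunction

theorem tendsto_atTop_of_le_imp_le {ι : Type*} {l : Filter ι} {f g : ι → ℝ}
    (hf : Tendsto f l atTop) (hfg : ∀ R, ∃ B, ∀ i, g i ≤ R → f i ≤ B) :
    Tendsto g l atTop := by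
  refine tendsto_atTop.2 fun R => ?_
  obtain ⟨B, hB⟩ := hfg R
  filter_upwards [hf.eventually_gt_atTop B] with i hi
  by_contra! hgi
  exact (hB i hgi.le).not_gt hi

section InvariantDistanceOnSubset

variable {Γ α : Type*} [Group Γ] [MulAction Γ α] {X : Set α} {dX : α → α → ℝ}

theorem dist_inv_smul_eq_of_invariant (hXinv : ∀ (γ : Γ), ∀ x ∈ X, γ • x ∈ X)
    (hdXsymm : ∀ p ∈ X, ∀ q ∈ X, dX p q = dX q p)
    (hdXinv : ∀ (γ : Γ), ∀ p ∈ X, ∀ q ∈ X, dX (γ • p) (γ • q) = dX p q)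
    {x₀ : α} (hx₀ : x₀ ∈ X) (γ : Γ) {a : α} (ha : a ∈ X) :
    dX x₀ (γ⁻¹ • a) = dX a (γ • x₀) := by
  rw [hdXsymm x₀ hx₀ _ (hXinv _ a ha), ← hdXinv γ⁻¹ a ha _ (hXinv γ x₀ hx₀), inv_smul_smul]

theorem dist_le_add_dist_smul_of_invariant (hXinv : ∀ (γ : Γ), ∀ x ∈ X, γ • x ∈ X)
    (hdXsymm : ∀ p ∈ X, ∀ q ∈ X, dX p q = dX q p)
    (hdXtri : ∀ p ∈ X, ∀ q ∈ X, ∀ r ∈ X, dX p r ≤ dX p q + dX q r)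
    (hdXinv : ∀ (γ : Γ), ∀ p ∈ X, ∀ q ∈ X, dX (γ • p) (γ • q) = dX p q)
    {x₀ : α} (hx₀ : x₀ ∈ X) (γ γ' : Γ) {a a' : α} (ha : a ∈ X) (ha' : a' ∈ X) :
    dX a a' ≤ dX a (γ • x₀) + dX x₀ ((γ⁻¹ * γ') • x₀) + dX a' (γ' • x₀) := by
  have hγ := hXinv γ x₀ hx₀
  have hγ' := hXinv γ' x₀ hx₀
  have hmid : dX (γ • x₀) (γ' • x₀) = dX x₀ ((γ⁻¹ * γ') • x₀) := by
    rw [← hdXinv γ x₀ hx₀ _ (hXinv _ x₀ hx₀), smul_smul, mul_inv_cancel_left]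
  linarith [hdXtri a ha _ hγ a' ha', hdXtri _ hγ _ hγ' a' ha', hdXsymm _ hγ' a' ha']

end InvariantDistanceOnSubset

theorem stmt1_general
    {Γ : Type*} [Group Γ]
    {Xh : Type*} [TopologicalSpace Xh] [MulAction Γ Xh]
    {Y : Type*} [MetricSpace Y] [ProperSpace Y] [MulAction Γ Y]
    (hisomY : ∀ (γ : Γ) (y y' : Y), dist (γ • y) (γ • y') = dist y y')
    -- `X` is a `Γ`-invariant subspace of `X̂`
    (X : Set Xh)
    (hXinv : ∀ (γ : Γ), ∀ x ∈ X, γ • x ∈ X)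
    -- `dX` is a `Γ`-invariant metric on `X` …
    (dX : Xh → Xh → ℝ)
    (hdXsymm : ∀ p ∈ X, ∀ q ∈ X, dX p q = dX q p)
    (hdXtri : ∀ p ∈ X, ∀ q ∈ X, ∀ r ∈ X, dX p r ≤ dX p q + dX q r)
    (hdXinv : ∀ (γ : Γ), ∀ p ∈ X, ∀ q ∈ X, dX (γ • p) (γ • q) = dX p q)
    -- … which is proper …
    (hdXproper : ∀ p ∈ X, ∀ r : ℝ, IsCompact {q ∈ X | dX p q ≤ r})
    -- the diagonal action of `Γ` on `X̂ × Y` is properly discontinuous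
    (hpd : ∀ K : Set (Xh × Y), IsCompact K → {γ : Γ | ∃ p ∈ K, γ • p ∈ K}.Finite)
    -- `dΓ` is a metric on `X̂ × Y` …
    (dΓ : (Xh × Y) → (Xh × Y) → ℝ)
    (htri : ∀ p q r, dΓ p r ≤ dΓ p q + dΓ q r)
    -- … which is `Γ`-invariant, proper, and induces the product topology
    (hinv : ∀ (γ : Γ) (p q : Xh × Y), dΓ (γ • p) (γ • q) = dΓ p q)
    (hproper : ∀ (p : Xh × Y) (r : ℝ), IsCompact {q | dΓ p q ≤ r})
    (htopo : ∀ (p : Xh × Y) (s : Set (Xh × Y)),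
      s ∈ 𝓝 p ↔ ∃ ε > 0, {q | dΓ p q < ε} ⊆ s)
    -- basepoints and the sequences
    (x₀ : Xh) (hx₀ : x₀ ∈ X) (y₀ : Y)
    (x x' : ℕ → Xh) (y y' : ℕ → Y)
    (hxX : ∀ i, x i ∈ X) (hx'X : ∀ i, x' i ∈ X)
    -- the `yᵢ`, `yᵢ'` stay within uniformly bounded distance of `y₀`
    (hybdd : ∃ C : ℝ, ∀ i, dist (y i) y₀ ≤ C ∧ dist (y' i) y₀ ≤ C)
    -- the `xᵢ`, `xᵢ'` stay within uniformly bounded `dX`-distance of `Stab_Γ(y₀) • x₀`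
    (hxorb : ∃ D : ℝ, ∀ i,
      (∃ γ : Γ, γ • y₀ = y₀ ∧ dX (x i) (γ • x₀) ≤ D) ∧
      (∃ γ : Γ, γ • y₀ = y₀ ∧ dX (x' i) (γ • x₀) ≤ D))
    (hdiv : Tendsto (fun i => dX (x i) (x' i)) atTop atTop) :
    Tendsto (fun i => dΓ (x i, y i) (x' i, y' i)) atTop atTop := by
  obtain ⟨C, hC⟩ := hybdd
  obtain ⟨D, hD⟩ := hxorb
  choose g hg hgD using fun i => (hD i).1
  choose g' hg' hg'D using fun i => (hD i).2
  set K : Set (Xh × Y) := {q ∈ X | dX x₀ q ≤ D} ×ˢ Metric.closedBall y₀ C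
  have hK : IsCompact K := (hdXproper x₀ hx₀ D).prod (isCompact_closedBall y₀ C)
  have hmemK : ∀ γ : Γ, γ • y₀ = y₀ → ∀ a ∈ X, dX a (γ • x₀) ≤ D → ∀ b, dist b y₀ ≤ C →
      γ⁻¹ • (a, b) ∈ K := by
    intro γ hγ a ha haD b hb
    have hγ' : γ⁻¹ • y₀ = y₀ := inv_smul_eq_iff.2 hγ.symm
    refine ⟨⟨hXinv _ a ha, ?_⟩, ?_⟩
    · exact (dist_inv_smul_eq_of_invariant hXinv hdXsymm hdXinv hx₀ γ ha).trans_le haD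
    · exact (hγ' ▸ hisomY γ⁻¹ b y₀).trans_le hb
  have hball : ∀ p, ∀ ε > 0, {q | dΓ p q < ε} ∈ 𝓝 p :=
    fun p ε hε => (htopo p _).2 ⟨ε, hε, subset_rfl⟩
  refine tendsto_atTop_of_le_imp_le hdiv fun R => ?_
  obtain ⟨B, hB⟩ := ((finite_setOf_dist_smul_le hpd htri hball hproper hK R).image
    fun γ => dX x₀ (γ • x₀)).bddAbove
  refine ⟨D + B + D, fun i hi => ?_⟩
  have hret : ((g i)⁻¹ * g' i) • (g' i)⁻¹ • (x' i, y' i) = (g i)⁻¹ • (x' i, y' i) := by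
    rw [mul_smul, smul_inv_smul]
  have hnear : dX x₀ (((g i)⁻¹ * g' i) • x₀) ≤ B :=
    hB ⟨_, ⟨_, hmemK _ (hg i) _ (hxX i) (hgD i) _ (hC i).1,
      _, hmemK _ (hg' i) _ (hx'X i) (hg'D i) _ (hC i).2, by rwa [hret, hinv]⟩, rfl⟩
  linarith [dist_le_add_dist_smul_of_invariant hXinv hdXsymm hdXtri hdXinv hx₀ (g i) (g' i)
    (hxX i) (hx'X i), hgD i, hg'D i]

/-- Lemma `boundedx` of the paper.
`Γ` acts by homeomorphisms on `X̂` and by isometries on a proper metric space `Y`;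
`X ⊆ X̂` is a `Γ`-invariant subspace with a proper `Γ`-invariant metric `dX`
inducing the subspace topology.  The diagonal action on `X̂ × Y` is properly
discontinuous and `dΓ` is a `Γ`-invariant proper metric on `X̂ × Y` inducing the
product topology.  If the `yᵢ, yᵢ'` stay at bounded distance from `y₀`, the
`xᵢ, xᵢ'` stay at bounded `dX`-distance from the `Stab_Γ(y₀)`-orbit of `x₀`, and
`dX xᵢ xᵢ' → ∞`, then `dΓ (xᵢ, yᵢ) (xᵢ', yᵢ') → ∞`. -/
theorem stmt1
    {Γ : Type*} [Group Γ]
    {Xh : Type*} [TopologicalSpace Xh] [MulAction Γ Xh]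
    (hcont : ∀ γ : Γ, Continuous (fun x : Xh => γ • x))
    {Y : Type*} [MetricSpace Y] [ProperSpace Y] [MulAction Γ Y]
    (hisomY : ∀ (γ : Γ) (y y' : Y), dist (γ • y) (γ • y') = dist y y')
    -- `X` is a `Γ`-invariant subspace of `X̂`
    (X : Set Xh)
    (hXinv : ∀ (γ : Γ), ∀ x ∈ X, γ • x ∈ X)
    -- `dX` is a `Γ`-invariant metric on `X` …
    (dX : Xh → Xh → ℝ)
    (hdXsymm : ∀ p ∈ X, ∀ q ∈ X, dX p q = dX q p)
    (hdXtri : ∀ p ∈ X, ∀ q ∈ X, ∀ r ∈ X, dX p r ≤ dX p q + dX q r)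
    (hdXeq : ∀ p ∈ X, ∀ q ∈ X, (dX p q = 0 ↔ p = q))
    (hdXinv : ∀ (γ : Γ), ∀ p ∈ X, ∀ q ∈ X, dX (γ • p) (γ • q) = dX p q)
    -- … which is proper …
    (hdXproper : ∀ p ∈ X, ∀ r : ℝ, IsCompact {q ∈ X | dX p q ≤ r})
    -- … and induces the subspace topology on `X`
    (hdXtopo : ∀ p ∈ X, ∀ s : Set Xh, s ∈ 𝓝[X] p ↔ ∃ ε > 0, {q ∈ X | dX p q < ε} ⊆ s)
    -- the diagonal action of `Γ` on `X̂ × Y` is properly discontinuous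
    (hpd : ∀ K : Set (Xh × Y), IsCompact K → {γ : Γ | ∃ p ∈ K, γ • p ∈ K}.Finite)
    -- `dΓ` is a metric on `X̂ × Y` …
    (dΓ : (Xh × Y) → (Xh × Y) → ℝ)
    (hsymm : ∀ p q, dΓ p q = dΓ q p)
    (htri : ∀ p q r, dΓ p r ≤ dΓ p q + dΓ q r)
    (heq : ∀ p q, dΓ p q = 0 ↔ p = q)
    -- … which is `Γ`-invariant, proper, and induces the product topology
    (hinv : ∀ (γ : Γ) (p q : Xh × Y), dΓ (γ • p) (γ • q) = dΓ p q)
    (hproper : ∀ (p : Xh × Y) (r : ℝ), IsCompact {q | dΓ p q ≤ r})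
    (htopo : ∀ (p : Xh × Y) (s : Set (Xh × Y)),
      s ∈ 𝓝 p ↔ ∃ ε > 0, {q | dΓ p q < ε} ⊆ s)
    -- basepoints and the sequences
    (x₀ : Xh) (hx₀ : x₀ ∈ X) (y₀ : Y)
    (x x' : ℕ → Xh) (y y' : ℕ → Y)
    (hxX : ∀ i, x i ∈ X) (hx'X : ∀ i, x' i ∈ X)
    -- the `yᵢ`, `yᵢ'` stay within uniformly bounded distance of `y₀`
    (hybdd : ∃ C : ℝ, ∀ i, dist (y i) y₀ ≤ C ∧ dist (y' i) y₀ ≤ C)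
    -- the `xᵢ`, `xᵢ'` stay within uniformly bounded `dX`-distance of `Stab_Γ(y₀) • x₀`
    (hxorb : ∃ D : ℝ, ∀ i,
      (∃ γ : Γ, γ • y₀ = y₀ ∧ dX (x i) (γ • x₀) ≤ D) ∧
      (∃ γ : Γ, γ • y₀ = y₀ ∧ dX (x' i) (γ • x₀) ≤ D))
    (hdiv : Tendsto (fun i => dX (x i) (x' i)) atTop atTop) :
    Tendsto (fun i => dΓ (x i, y i) (x' i, y' i)) atTop atTop :=
  stmt1_general hisomY X hXinv dX hdXsymm hdXtri hdXinv hdXproper hpd dΓ htri hinv hproper htopo x₀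
    hx₀ y₀ x x' y y' hxX hx'X hybdd hxorb hdiv
end

section
/- Let k be an infinite field, n ≥ 1, and let 0 = V₀ ⊂ V₁ ⊂ ⋯ ⊂ Vₙ = kⁿ be a complete flag in kⁿ. Then there exists a basis e₁, …, eₙ of kⁿ such that for every subset S ⊆ {1, …, n} and every 0 ≤ i ≤ n, dim(V_i ∩ span{e_j : j ∈ S}) = max(0, i + |S| − n); that is, every span of a subset of the basis is in general position with every subspace of the flag (so the apartment of the flag building determined by the basis consists of chambers opposite the chamber determined by the flag). -/
/-!
Choose a basis `f` adapted to the flag, `Vᵢ = span {f_j : j < i}`, and let `e_j` be the point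
`(1, c_j, c_j², …, c_j^(n-1))` of the moment curve in `f`-coordinates, for distinct nonzero scalars
`c_j` (which exist as `k` is infinite). A vector of `Vᵢ ⊓ span {e_j : j ∈ T}` has vanishing
coordinates `i, …, i + |T| - 1`; for its coefficients this is a Vandermonde system scaled by the
`c_j ^ i`, so `Vᵢ` and `span e_T` are disjoint as soon as `i + |T| ≤ n`. For an arbitrary `S` the
dimension formula then gives `dim (Vᵢ ⊓ span e_S) = i + |S| - n`, using a subset `T ⊆ S` of size
`n - i` to see that `Vᵢ ⊔ span e_S` is everything when `i + |S| > n`.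
-/

open Module Submodule

theorem Module.Basis.exists_flag_eq {K M : Type*} [DivisionRing K] [AddCommGroup M] [Module K M]
    [FiniteDimensional K M] {n : ℕ} (hM : finrank K M = n) {V : Fin (n + 1) → Submodule K M}
    (hV : StrictMono V) (hdim : ∀ i, finrank K (V i) = i) :
    ∃ b : Basis (Fin n) K M, b.flag = V := by
  choose f hf_mem hf_not using fun j : Fin n => SetLike.exists_of_lt (hV j.castSucc_lt_succ)
  have hspan : ∀ i, span K (f '' {j | j.castSucc < i}) = V i := by
    intro i
    induction i using Fin.induction with
    | zero => simpa using (finrank_eq_zero.1 (hdim 0)).symm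
    | succ j ih =>
      have himage : f '' {l | l.castSucc < j.succ} =
          insert (f j) (f '' {l | l.castSucc < j.castSucc}) := by
        simp only [Fin.castSucc_lt_castSucc_iff, Fin.castSucc_lt_succ_iff, le_iff_eq_or_lt,
          Set.ofPred_or, Set.ofPred_eq_eq_singleton, Set.singleton_union, Set.image_insert_eq]
      rw [himage, span_insert, ih, sup_comm]
      refine eq_of_le_of_finrank_le (sup_le (hV.monotone j.castSucc_le_succ)
        ((span_singleton_le_iff_mem _ _).2 (hf_mem j))) ?_
      rw [finrank_sup_span_singleton (hf_not j), hdim, hdim]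
      simp
  have htop : span K (Set.range f) = ⊤ := by
    rw [← Set.image_univ, ← eq_top_of_finrank_eq ((hdim (Fin.last n)).trans hM.symm), ← hspan]
    simp [Fin.castSucc_lt_last]
  refine ⟨basisOfTopLeSpanOfCardEqFinrank f htop.ge (by simp [hM]), funext fun i => ?_⟩
  rw [Basis.flag, coe_basisOfTopLeSpanOfCardEqFinrank, hspan]

theorem finrank_span_image_finset {K M ι : Type*} [DivisionRing K] [AddCommGroup M] [Module K M]
    {e : ι → M} (he : LinearIndependent K e) (S : Finset ι) :
    finrank K (span K (e '' S)) = S.card := by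
  rw [Set.image_eq_range]
  exact (finrank_span_eq_card (he.comp _ Subtype.val_injective)).trans (Fintype.card_coe S)

theorem finrank_inf_span_image_eq_of_disjoint {K M ι : Type*} [DivisionRing K] [AddCommGroup M]
    [Module K M] [FiniteDimensional K M] (U : Submodule K M) {e : ι → M}
    (he : LinearIndependent K e)
    (hU : ∀ T : Finset ι, finrank K U + T.card ≤ finrank K M → Disjoint U (span K (e '' T)))
    (S : Finset ι) :
    finrank K ↥(U ⊓ span K (e '' S)) = finrank K U + S.card - finrank K M := by
  have hS := finrank_sup_add_finrank_inf_eq U (span K (e '' S))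
  rw [finrank_span_image_finset he] at hS
  have hUM := finrank_le U
  by_cases hsmall : finrank K U + S.card ≤ finrank K M
  · rw [disjoint_iff.1 (hU S hsmall), finrank_bot]
    omega
  · obtain ⟨T, hTS, hT⟩ :=
      Finset.exists_subset_card_eq (s := S) (n := finrank K M - finrank K U) (by omega)
    have hTsup := finrank_sup_add_finrank_inf_eq U (span K (e '' T))
    rw [finrank_span_image_finset he, disjoint_iff.1 (hU T (by omega)), finrank_bot] at hTsup
    have hmono : finrank K ↥(U ⊔ span K (e '' T)) ≤ finrank K ↥(U ⊔ span K (e '' S)) :=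
      finrank_mono (sup_le_sup_left (span_mono (Set.image_mono (Finset.coe_subset.2 hTS))) _)
    have hSM := finrank_le (U ⊔ span K (e '' S))
    omega

theorem eq_zero_of_forall_sum_mul_pow_add_eq_zero {R ι : Type*} [CommRing R] [IsDomain R]
    [Fintype ι] {c : ι → R} (hc : Function.Injective c) (hc0 : ∀ j, c j ≠ 0) {a : ι → R} (i : ℕ)
    (h : ∀ m < Fintype.card ι, ∑ j, a j * c j ^ (i + m) = 0) : a = 0 := by
  let σ := Fintype.equivFin ι
  have hscaled : (fun l => a (σ.symm l) * c (σ.symm l) ^ i) = 0 := by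
    refine Matrix.eq_zero_of_forall_pow_sum_mul_pow_eq_zero (hc.comp σ.symm.injective) fun m => ?_
    simpa [pow_add, mul_assoc, σ.symm.sum_comp (fun j => a j * (c j ^ i * c j ^ (m : ℕ)))]
      using h m m.isLt
  funext j
  simpa [hc0] using congrFun hscaled (σ j)

namespace Module.Basis

variable {K M : Type*} [Field K] [AddCommGroup M] [Module K M] {n : ℕ}

noncomputable def momentCurve (b : Basis (Fin n) K M) (t : K) : M :=
  b.equivFun.symm fun m => t ^ (m : ℕ)

@[simp]
theorem repr_momentCurve (b : Basis (Fin n) K M) (t : K) (l : Fin n) :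
    b.repr (b.momentCurve t) l = t ^ (l : ℕ) := by
  rw [← equivFun_apply, momentCurve, LinearEquiv.apply_symm_apply]

theorem linearIndependent_momentCurve (b : Basis (Fin n) K M) {c : Fin n → K}
    (hc : Function.Injective c) : LinearIndependent K (b.momentCurve ∘ c) :=
  (Matrix.linearIndependent_rows_of_det_ne_zero (Matrix.det_vandermonde_ne_zero_iff.2 hc)).map'
    b.equivFun.symm.toLinearMap b.equivFun.symm.ker

theorem disjoint_flag_span_momentCurve (b : Basis (Fin n) K M) {ι : Type*} {c : ι → K}
    (hc : Function.Injective c) (hc0 : ∀ j, c j ≠ 0) {i : Fin (n + 1)} {T : Finset ι}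
    (hT : (i : ℕ) + T.card ≤ n) : Disjoint (b.flag i) (span K ((b.momentCurve ∘ c) '' T)) := by
  rw [disjoint_def]
  intro v hv hvT
  obtain ⟨a, rfl⟩ := (Fintype.mem_span_image_iff_exists_fun K).1 hvT
  suffices a = 0 by simp [this]
  refine eq_zero_of_forall_sum_mul_pow_add_eq_zero (hc.comp Subtype.val_injective)
    (fun j => hc0 j.1) i fun m hm => ?_
  have hcoord := b.flag_le_ker_coord (l := ⟨i + m, by simp at hm; omega⟩) (by simp [Fin.le_def]) hv
  simpa using hcoord

end Module.Basis

theorem stmt5_general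
    (k : Type*) [Field k] [Infinite k] (n : ℕ)
    (V : Fin (n + 1) → Submodule k (Fin n → k))
    (hchain : StrictMono V)
    (hdim : ∀ i : Fin (n + 1), Module.finrank k (V i) = (i : ℕ)) :
    ∃ b : Module.Basis (Fin n) k (Fin n → k),
      ∀ (S : Finset (Fin n)) (i : Fin (n + 1)),
        Module.finrank k ↥(V i ⊓ Submodule.span k (⇑b '' ↑S)) =
          (i : ℕ) + S.card - n := by
  obtain ⟨f, rfl⟩ := Basis.exists_flag_eq (finrank_fin_fun k) hchain hdim
  obtain ⟨c, hc, hc0⟩ : ∃ c : Fin n → k, Function.Injective c ∧ ∀ j, c j ≠ 0 := by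
    let t := (Set.finite_singleton (0 : k)).infinite_compl.natEmbedding
    exact ⟨fun j => t j, fun j l h => Fin.val_injective (t.injective (Subtype.ext h)),
      fun j => (t j).2⟩
  have he := f.linearIndependent_momentCurve hc
  refine ⟨basisOfLinearIndependentOfCardEqFinrank' _ he (by simp), fun S i => ?_⟩
  rw [coe_basisOfLinearIndependentOfCardEqFinrank', finrank_inf_span_image_eq_of_disjoint _ he,
    hdim, finrank_fin_fun]
  intro T hT
  rw [hdim, finrank_fin_fun] at hT
  exact f.disjoint_flag_span_momentCurve hc hc0 hT

/-- opposite apartments in the flag building over an infinite field.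
Let `k` be an infinite field, `n ≥ 1`, and let `0 = V₀ ⊂ V₁ ⊂ ⋯ ⊂ Vₙ = kⁿ` be a
complete flag in `kⁿ`.  Then there is a basis `e₁, …, eₙ` of `kⁿ` such that every
span of a subset of the basis is in general position with every subspace of the
flag:  `dim (Vᵢ ⊓ span {eⱼ : j ∈ S}) = max (0, i + |S| − n)` (written with
truncated subtraction in `ℕ`). -/
theorem stmt5
    (k : Type*) [Field k] [Infinite k] (n : ℕ) (hn : 1 ≤ n)
    (V : Fin (n + 1) → Submodule k (Fin n → k))
    (hV0 : V 0 = ⊥) (hVtop : V (Fin.last n) = ⊤)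
    (hchain : StrictMono V)
    (hdim : ∀ i : Fin (n + 1), Module.finrank k (V i) = (i : ℕ)) :
    ∃ b : Module.Basis (Fin n) k (Fin n → k),
      ∀ (S : Finset (Fin n)) (i : Fin (n + 1)),
        Module.finrank k ↥(V i ⊓ Submodule.span k (⇑b '' ↑S)) =
          (i : ℕ) + S.card - n :=
  stmt5_general k n V hchain hdim
end

section
/- For every n ≥ 1, the direct product (F₂)ⁿ of n copies of the free group of rank 2 admits a properly discontinuous action by homeomorphisms on ℝ^{2n}; combined with the lower bound this gives actdim((F₂)ⁿ) = 2n. -/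
/-!
`F₂ = ⟨a₀, a₁⟩` acts on the plane by the shears `aᵢ^{±1} : xᵢ ↦ xᵢ ± (2 + 2 |x_{1-i}|)`, fixing
the other coordinate. This is a ping-pong action: a letter that does not cancel the previous one
maps the cone `|x_{1-i}| + 1 ≤ ± xᵢ` of the previous letter into its own cone, pushing the leading
coordinate out by at least `2`, and a letter that does not land in its own cone starts from the cone
of its inverse. Hence the orbit of a point under a reduced word first runs inwards through the
cones of the inverse letters and then outwards through the cones of the letters, so the length of
the word is bounded by the norms of the two endpoints. This is proper discontinuity on `ℝ²`; the
action of `(F₂)ⁿ` on `ℝ^{2n} ≅ (ℝ²)ⁿ` is the product action.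
-/

open Equiv Set

section ProperlyDiscontinuous

structure IsProperlyDiscontinuousAction {G X : Type*} [Monoid G] [TopologicalSpace X]
    (ρ : G →* Perm X) : Prop where
  continuous (g : G) : Continuous (ρ g)
  finite_returns (K : Set X) : IsCompact K → {g | ∃ x ∈ K, ρ g x ∈ K}.Finite

def piPermHom {ι : Type*} (X : ι → Type*) : (∀ i, Perm (X i)) →* Perm (∀ i, X i) where
  toFun := Equiv.piCongrRight
  map_one' := rfl
  map_mul' _ _ := rfl

theorem IsProperlyDiscontinuousAction.pi {ι : Type*} [Finite ι] {G X : ι → Type*}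
    [∀ i, Monoid (G i)] [∀ i, TopologicalSpace (X i)] {ρ : ∀ i, G i →* Perm (X i)}
    (h : ∀ i, IsProperlyDiscontinuousAction (ρ i)) :
    IsProperlyDiscontinuousAction ((piPermHom X).comp (MonoidHom.piMap ρ)) where
  continuous g := continuous_pi fun i => ((h i).continuous (g i)).comp (continuous_apply i)
  finite_returns K hK := by
    refine (Finite.pi' fun i => (h i).finite_returns _ (hK.image (continuous_apply i))).subset ?_
    rintro g ⟨x, hx, hgx⟩ i
    exact ⟨x i, mem_image_of_mem _ hx, _, hgx, rfl⟩

theorem IsProperlyDiscontinuousAction.permCongr {G X Y : Type*} [Monoid G]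
    [TopologicalSpace X] [TopologicalSpace Y] {ρ : G →* Perm X}
    (h : IsProperlyDiscontinuousAction ρ) (e : X ≃ₜ Y) :
    IsProperlyDiscontinuousAction (e.toEquiv.permCongrHom.toMonoidHom.comp ρ) where
  continuous g := e.continuous.comp ((h.continuous g).comp e.symm.continuous)
  finite_returns K hK := by
    refine (h.finite_returns _ (hK.image e.symm.continuous)).subset ?_
    rintro g ⟨y, hy, hgy⟩
    exact ⟨e.symm y, mem_image_of_mem _ hy, _, hgy, by simp [Equiv.permCongr_apply]⟩

end ProperlyDiscontinuous

namespace PlaneShear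

local notation "ℝ²" => Fin 2 → ℝ

def invLetter (ℓ : Fin 2 × Bool) : Fin 2 × Bool := (ℓ.1, !ℓ.2)

def letterSign (b : Bool) : ℝ := if b then 1 else -1

def lead (ℓ : Fin 2 × Bool) (q : ℝ²) : ℝ := letterSign ℓ.2 * q ℓ.1

def transverse (ℓ : Fin 2 × Bool) (q : ℝ²) : ℝ := |q ℓ.1.rev|

def shear (ℓ : Fin 2 × Bool) (q : ℝ²) : ℝ² :=
  Function.update q ℓ.1 (q ℓ.1 + letterSign ℓ.2 * (2 + 2 * transverse ℓ q))

def cone (ℓ : Fin 2 × Bool) : Set ℝ² := {q | transverse ℓ q + 1 ≤ lead ℓ q}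

variable {ℓ ℓ' : Fin 2 × Bool} {q : ℝ²}

theorem letterSign_mul_self (b : Bool) : letterSign b * letterSign b = 1 := by
  cases b <;> simp [letterSign]

theorem abs_letterSign (b : Bool) : |letterSign b| = 1 := by
  cases b <;> simp [letterSign]

theorem letterSign_not (b : Bool) : letterSign (!b) = -letterSign b := by
  cases b <;> simp [letterSign]

theorem invLetter_invLetter (ℓ : Fin 2 × Bool) : invLetter (invLetter ℓ) = ℓ := by
  simp [invLetter]

theorem rev_ne_self (i : Fin 2) : i.rev ≠ i := by
  fin_cases i <;> decide

theorem eq_rev_of_ne {i j : Fin 2} (h : j ≠ i) : j = i.rev := by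
  fin_cases i <;> fin_cases j <;> simp_all

theorem abs_lead : |lead ℓ q| = |q ℓ.1| := by
  rw [lead, abs_mul, abs_letterSign, one_mul]

theorem abs_lead_le_norm : |lead ℓ q| ≤ ‖q‖ := by
  simpa [abs_lead] using norm_le_pi_norm q ℓ.1

theorem lead_invLetter : lead (invLetter ℓ) q = -lead ℓ q := by
  rw [lead, invLetter, letterSign_not, neg_mul, lead]

theorem transverse_invLetter : transverse (invLetter ℓ) q = transverse ℓ q := rfl

theorem shear_apply_self : shear ℓ q ℓ.1 = q ℓ.1 + letterSign ℓ.2 * (2 + 2 * transverse ℓ q) :=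
  Function.update_self _ _ _

theorem shear_apply_rev : shear ℓ q ℓ.1.rev = q ℓ.1.rev :=
  Function.update_of_ne (rev_ne_self _) _ _

theorem transverse_shear : transverse ℓ (shear ℓ q) = transverse ℓ q := by
  rw [transverse, shear_apply_rev, transverse]

theorem lead_shear : lead ℓ (shear ℓ q) = lead ℓ q + (2 + 2 * transverse ℓ q) := by
  rw [lead, lead, shear_apply_self, mul_add, ← mul_assoc, letterSign_mul_self, one_mul]

theorem shear_invLetter_shear : shear (invLetter ℓ) (shear ℓ q) = q := by
  ext j
  rcases eq_or_ne j ℓ.1 with rfl | hj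
  · change shear (invLetter ℓ) (shear ℓ q) (invLetter ℓ).1 = q ℓ.1
    rw [shear_apply_self, transverse_invLetter, transverse_shear]
    change shear ℓ q ℓ.1 + letterSign (!ℓ.2) * _ = _
    rw [shear_apply_self, letterSign_not]
    ring
  · simp [shear, invLetter, hj]

def shearPerm (ℓ : Fin 2 × Bool) : Perm ℝ² where
  toFun := shear ℓ
  invFun := shear (invLetter ℓ)
  left_inv _ := shear_invLetter_shear
  right_inv q := by
    simpa [invLetter_invLetter] using shear_invLetter_shear (ℓ := invLetter ℓ) (q := q)

theorem continuous_shear (ℓ : Fin 2 × Bool) : Continuous (shear ℓ) := by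
  unfold shear transverse
  fun_prop

theorem mem_cone : q ∈ cone ℓ ↔ transverse ℓ q + 1 ≤ lead ℓ q := Iff.rfl

theorem one_le_lead (h : q ∈ cone ℓ) : 1 ≤ lead ℓ q := by
  have : 0 ≤ transverse ℓ q := abs_nonneg _
  exact le_trans (by linarith) h

theorem shear_mem_cone_of_mem_cone (h : q ∈ cone ℓ) (hred : ℓ'.1 = ℓ.1 → ℓ'.2 = ℓ.2) :
    shear ℓ' q ∈ cone ℓ' ∧ lead ℓ q + 2 ≤ lead ℓ' (shear ℓ' q) := by
  have h₀ : 0 ≤ transverse ℓ q := abs_nonneg _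
  have h₀' : 0 ≤ transverse ℓ' q := abs_nonneg _
  rw [mem_cone] at h ⊢
  rw [transverse_shear, lead_shear]
  by_cases haxis : ℓ'.1 = ℓ.1
  · obtain rfl : ℓ' = ℓ := Prod.ext haxis (hred haxis)
    constructor <;> linarith
  · have hrev : ℓ'.1 = ℓ.1.rev := eq_rev_of_ne haxis
    have htrans : transverse ℓ' q = lead ℓ q := by
      rw [transverse, hrev, Fin.rev_rev, ← abs_lead, abs_of_nonneg (by linarith)]
    have hlead : -transverse ℓ q ≤ lead ℓ' q := by
      rw [transverse, ← hrev, ← abs_lead]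
      exact neg_abs_le _
    constructor <;> linarith

theorem mem_cone_invLetter_of_shear_notMem_cone (h : shear ℓ q ∉ cone ℓ) :
    q ∈ cone (invLetter ℓ) := by
  rw [mem_cone, transverse_shear, lead_shear, not_le] at h
  rw [mem_cone, lead_invLetter, transverse_invLetter]
  linarith

theorem foldr_shear_mem_cone_or (q : ℝ²) (ℓ : Fin 2 × Bool) (t : List (Fin 2 × Bool))
    (hred : FreeGroup.IsReduced (ℓ :: t)) :
    ((ℓ :: t).foldr shear q ∈ cone ℓ ∧
        2 * t.length ≤ lead ℓ ((ℓ :: t).foldr shear q) + ‖q‖) ∨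
      (t.foldr shear q ∈ cone (invLetter ℓ) ∧
        lead (invLetter ℓ) (t.foldr shear q) + 2 * t.length ≤ ‖q‖) := by
  induction t generalizing ℓ with
  | nil =>
    by_cases h : shear ℓ q ∈ cone ℓ
    · refine .inl ⟨h, ?_⟩
      simp only [List.length_nil, CharP.cast_eq_zero, mul_zero, List.foldr_cons, List.foldr_nil]
      linarith [one_le_lead h, norm_nonneg q]
    · refine .inr ⟨mem_cone_invLetter_of_shear_notMem_cone h, ?_⟩
      simpa using (le_abs_self _).trans abs_lead_le_norm
  | cons ℓ₀ t ih =>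
    obtain ⟨hℓ, hred₀⟩ := FreeGroup.isReduced_cons_cons.mp hred
    set p := (ℓ₀ :: t).foldr shear q
    have hp : (ℓ :: ℓ₀ :: t).foldr shear q = shear ℓ p := rfl
    rw [hp, List.length_cons]
    push_cast
    rcases ih ℓ₀ hred₀ with ⟨hcone, hlen⟩ | ⟨hcone, hlen⟩
    · obtain ⟨hcone', hstep⟩ := shear_mem_cone_of_mem_cone hcone hℓ
      exact .inl ⟨hcone', by linarith⟩
    by_cases h : shear ℓ p ∈ cone ℓ
    · exact .inl ⟨h, by linarith [one_le_lead hcone, one_le_lead h]⟩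
    · have hp' : p ∈ cone (invLetter ℓ) := mem_cone_invLetter_of_shear_notMem_cone h
      -- read backwards, `invLetter ℓ₀` moves `p` outwards from the cone of `invLetter ℓ`
      have hback : t.foldr shear q = shear (invLetter ℓ₀) p := shear_invLetter_shear.symm
      obtain ⟨-, hstep⟩ := shear_mem_cone_of_mem_cone (ℓ' := invLetter ℓ₀) hp'
        (by simpa [invLetter] using fun h => (hℓ h.symm).symm)
      rw [← hback] at hstep
      exact .inr ⟨hp', by linarith⟩

theorem two_mul_length_le_of_isReduced {L : List (Fin 2 × Bool)} (hred : FreeGroup.IsReduced L)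
    (q : ℝ²) : 2 * L.length ≤ ‖L.foldr shear q‖ + ‖q‖ + 2 := by
  cases L with
  | nil => simp only [List.length_nil, CharP.cast_eq_zero, mul_zero]; positivity
  | cons ℓ t =>
    have hlead : lead ℓ (List.foldr shear q (ℓ :: t)) ≤ ‖(ℓ :: t).foldr shear q‖ :=
      (le_abs_self _).trans abs_lead_le_norm
    rw [List.length_cons]
    push_cast
    rcases foldr_shear_mem_cone_or q ℓ t hred with ⟨-, hlen⟩ | ⟨hcone, hlen⟩
    · linarith
    · linarith [one_le_lead hcone, norm_nonneg ((ℓ :: t).foldr shear q)]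

def shearAction : FreeGroup (Fin 2) →* Perm ℝ² :=
  FreeGroup.lift fun i => shearPerm (i, true)

theorem shearAction_apply (g : FreeGroup (Fin 2)) (q : ℝ²) :
    shearAction g q = g.toWord.foldr shear q := by
  rw [← FreeGroup.mk_toWord (x := g), shearAction, FreeGroup.lift_mk, FreeGroup.toWord_mk,
    FreeGroup.reduce_toWord]
  induction g.toWord with
  | nil => rfl
  | cons ℓ L ih =>
    rw [List.map_cons, List.prod_cons, Perm.mul_apply, ih]
    obtain ⟨i, _ | _⟩ := ℓ <;> rfl

theorem continuous_foldr_shear (L : List (Fin 2 × Bool)) : Continuous (L.foldr shear) := by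
  induction L with
  | nil => exact continuous_id
  | cons ℓ L ih => exact (continuous_shear ℓ).comp ih

theorem isProperlyDiscontinuousAction_shearAction :
    IsProperlyDiscontinuousAction shearAction where
  continuous g := by
    simpa only [← funext (shearAction_apply g)] using continuous_foldr_shear g.toWord
  finite_returns K hK := by
    obtain ⟨R, hR⟩ := hK.isBounded.exists_norm_le
    refine ((List.finite_length_le _ ⌈R + 1⌉₊).preimage
      FreeGroup.toWord_injective.injOn).subset ?_
    rintro g ⟨q, hq, hgq⟩
    have hlen := two_mul_length_le_of_isReduced (FreeGroup.isReduced_toWord (x := g)) q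
    rw [← shearAction_apply] at hlen
    have : (g.toWord.length : ℝ) ≤ R + 1 := by linarith [hR q hq, hR _ hgq]
    exact Nat.cast_le.mp (this.trans (Nat.le_ceil _))

end PlaneShear

theorem stmt10_general (n : ℕ) :
    ∃ ρ : (Fin n → FreeGroup (Fin 2)) →* Equiv.Perm (Fin (2 * n) → ℝ),
      (∀ γ, Continuous (ρ γ)) ∧
      ∀ K : Set (Fin (2 * n) → ℝ), IsCompact K →
        {γ | ∃ x ∈ K, ρ γ x ∈ K}.Finite := by
  let e : (Fin n → Fin 2 → ℝ) ≃ₜ (Fin (2 * n) → ℝ) :=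
    Homeomorph.piCurry.symm.trans
      (Homeomorph.piCongrLeft (Y := fun _ => ℝ) (finProdFinEquiv.trans (finCongr (mul_comm n 2))))
  have h := (IsProperlyDiscontinuousAction.pi fun _ : Fin n =>
    PlaneShear.isProperlyDiscontinuousAction_shearAction).permCongr e
  exact ⟨_, h.continuous, h.finite_returns⟩

/-- `actdim ((F₂)ⁿ) ≤ 2n`, realizing the action dimension.
For every `n ≥ 1`, the direct product `(F₂)ⁿ` of `n` copies of the free group
of rank `2` admits a properly discontinuous action by homeomorphisms on
`ℝ^{2n}`; combined with the lower bound this gives `actdim ((F₂)ⁿ) = 2n`. -/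
theorem stmt10 (n : ℕ) (hn : 1 ≤ n) :
    ∃ ρ : (Fin n → FreeGroup (Fin 2)) →* Equiv.Perm (Fin (2 * n) → ℝ),
      (∀ γ, Continuous (ρ γ)) ∧
      ∀ K : Set (Fin (2 * n) → ℝ), IsCompact K →
        {γ | ∃ x ∈ K, ρ γ x ∈ K}.Finite :=
  stmt10_general n
end
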